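/- Suppose S and T are bounded operators on H satisfying the symplectic relations, so that S is boundedly invertible. Then Γ∘(S⁻¹∘T̄)*∘Γ = S⁻¹∘T̄, where T̄ = Γ∘T∘Γ. -/

import Mathlib

noncomputable section

open ContinuousLinearMap Filter
open scoped Topology

/-- `conj ∘ conj = id` as a `RingHomCompTriple`, so that conjugate-linear maps compose. -/
instance : RingHomCompTriple (starRingEnd ℂ) (starRingEnd ℂ) (RingHom.id ℂ) :=
  ⟨RingHom.ext fun z => Complex.conj_conj z⟩

variable {H : Type*} [NormedAddCommGroup H] [InnerProductSpace ℂ H] [CompleteSpace H]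

/-- For a conjugation `Γ` (a conjugate-linear isometric involution) and a bounded operator `X`,
the operator `X̄ = Γ ∘ X ∘ Γ`. -/
def conjOp (Γ : H →ₛₗᵢ[starRingEnd ℂ] H) (X : H →L[ℂ] H) : H →L[ℂ] H :=
  Γ.toContinuousLinearMap.comp (X.comp Γ.toContinuousLinearMap)

/-- The Hilbert space direct sum `H ⊕ H`. -/
abbrev H2 (H : Type*) [NormedAddCommGroup H] [InnerProductSpace ℂ H] : Type _ :=
  WithLp 2 (H × H)

/-- The element `(φ, ψ)` of `H ⊕ H`. -/
def mk2 (φ ψ : H) : H2 H := (WithLp.equiv 2 (H × H)).symm (φ, ψ)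

/-- The inclusion `f ↦ (f, 0)` of `H` into `H ⊕ H`. -/
def inc1 : H →L[ℂ] H2 H :=
  (WithLp.prodContinuousLinearEquiv 2 ℂ H H).symm.toContinuousLinearMap.comp
    (ContinuousLinearMap.inl ℂ H H)

/-- The inclusion `f ↦ (0, f)` of `H` into `H ⊕ H`. -/
def inc2 : H →L[ℂ] H2 H :=
  (WithLp.prodContinuousLinearEquiv 2 ℂ H H).symm.toContinuousLinearMap.comp
    (ContinuousLinearMap.inr ℂ H H)

/-- The projection `(φ, ψ) ↦ φ` of `H ⊕ H` onto the first coordinate. -/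
def proj1 : H2 H →L[ℂ] H :=
  (ContinuousLinearMap.fst ℂ H H).comp
    (WithLp.prodContinuousLinearEquiv 2 ℂ H H).toContinuousLinearMap

/-- The projection `(φ, ψ) ↦ ψ` of `H ⊕ H` onto the second coordinate. -/
def proj2 : H2 H →L[ℂ] H :=
  (ContinuousLinearMap.snd ℂ H H).comp
    (WithLp.prodContinuousLinearEquiv 2 ℂ H H).toContinuousLinearMap

/-- The block `B₁₁ f = P₁ B (f, 0)` of an operator `B` on `H ⊕ H`. -/
def blk11 (B : H2 H →L[ℂ] H2 H) : H →L[ℂ] H := proj1.comp (B.comp inc1)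

/-- The block `B₂₁ f = P₂ B (f, 0)` of an operator `B` on `H ⊕ H`. -/
def blk21 (B : H2 H →L[ℂ] H2 H) : H →L[ℂ] H := proj2.comp (B.comp inc1)

/-- The block `B₁₂ f = P₁ B (0, f)` of an operator `B` on `H ⊕ H`. -/
def blk12 (B : H2 H →L[ℂ] H2 H) : H →L[ℂ] H := proj1.comp (B.comp inc2)

/-- The block `B₂₂ f = P₂ B (0, f)` of an operator `B` on `H ⊕ H`. -/
def blk22 (B : H2 H →L[ℂ] H2 H) : H →L[ℂ] H := proj2.comp (B.comp inc2)

/-- `X` is Hilbert–Schmidt with respect to the Hilbert basis `b`. -/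
def IsHS {E : Type*} [NormedAddCommGroup E] [InnerProductSpace ℂ E] {ι : Type*}
    (b : HilbertBasis ι ℂ E) (X : E →L[ℂ] E) : Prop :=
  Summable fun i => ‖X (b i)‖ ^ 2

/-- The Hilbert–Schmidt norm `‖X‖₂ = (∑ᵢ ‖X eᵢ‖²)^{1/2}` with respect to the Hilbert basis `b`. -/
def hsNorm {E : Type*} [NormedAddCommGroup E] [InnerProductSpace ℂ E] {ι : Type*}
    (b : HilbertBasis ι ℂ E) (X : E →L[ℂ] E) : ℝ :=
  Real.sqrt (∑' i, ‖X (b i)‖ ^ 2)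

/-- The symplectic relations for the pair `(S, T)` relative to the conjugation `Γ`:
`S*S − T*T = 1`, `S̄*T − T̄*S = 0`, `SS* − (TT*)‾ = 1`, `TS* − (ST*)‾ = 0`. -/
def SympRel (Γ : H →ₛₗᵢ[starRingEnd ℂ] H) (S T : H →L[ℂ] H) : Prop :=
  adjoint S ∘L S - adjoint T ∘L T = 1 ∧
  adjoint (conjOp Γ S) ∘L T - adjoint (conjOp Γ T) ∘L S = 0 ∧
  S ∘L adjoint S - conjOp Γ (T ∘L adjoint T) = 1 ∧
  T ∘L adjoint S - conjOp Γ (S ∘L adjoint T) = 0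

/-!
`X ↦ Xᵗ := Γ X* Γ` is an anti-multiplicative involution, a transpose. Applying `Γ · Γ` to the
relation `TS* = (ST*)‾` turns it into `R Sᵗ = S Rᵗ` for `R = T̄` (note `T̄ᵗ = T*`), and then
`(S⁻¹R)ᵗ = Rᵗ (S⁻¹)ᵗ = S⁻¹ S Rᵗ (S⁻¹)ᵗ = S⁻¹ R Sᵗ (S⁻¹)ᵗ = S⁻¹ R (S⁻¹S)ᵗ = S⁻¹ R`.
-/

theorem LinearIsometry.inner_map_map_of_conj {E : Type*} [NormedAddCommGroup E]
    [InnerProductSpace ℂ E] (Γ : E →ₛₗᵢ[starRingEnd ℂ] E) (x y : E) :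
    inner ℂ (Γ x) (Γ y) = inner ℂ y x := by
  have re_inner_map_map : ∀ x y : E,
      RCLike.re (inner ℂ (Γ x) (Γ y)) = RCLike.re (inner ℂ x y) := fun x y => by
    rw [re_inner_eq_norm_add_mul_self_sub_norm_mul_self_sub_norm_mul_self_div_two, ← map_add,
      Γ.norm_map, Γ.norm_map, Γ.norm_map,
      re_inner_eq_norm_add_mul_self_sub_norm_mul_self_sub_norm_mul_self_div_two]
  apply Complex.ext
  · rw [← inner_conj_symm y x, Complex.conj_re]
    exact re_inner_map_map x y
  · -- the imaginary part is the real part after multiplying `y` by `I`, which `Γ` conjugates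
    have h := re_inner_map_map x (Complex.I • y)
    simp only [LinearIsometry.map_smulₛₗ, Complex.conj_I, neg_smul, inner_neg_right,
      inner_smul_right, RCLike.re_to_complex, Complex.neg_re, Complex.mul_re, Complex.I_re,
      Complex.I_im] at h
    rw [← inner_conj_symm y x, Complex.conj_im]
    linarith

section Conjugation

variable {E : Type*} [NormedAddCommGroup E] [InnerProductSpace ℂ E] (Γ : E →ₛₗᵢ[starRingEnd ℂ] E)

theorem conjOp_comp (hΓ : ∀ x, Γ (Γ x) = x) (A B : E →L[ℂ] E) :
    conjOp Γ (A ∘L B) = conjOp Γ A ∘L conjOp Γ B := by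
  ext x; simp [conjOp, hΓ]

theorem conjOp_conjOp (hΓ : ∀ x, Γ (Γ x) = x) (A : E →L[ℂ] E) :
    conjOp Γ (conjOp Γ A) = A := by
  ext x; simp [conjOp, hΓ]

theorem conjOp_one (hΓ : ∀ x, Γ (Γ x) = x) : conjOp Γ (1 : E →L[ℂ] E) = 1 := by
  ext x; simp [conjOp, hΓ]

variable [CompleteSpace E]

theorem adjoint_conjOp (hΓ : ∀ x, Γ (Γ x) = x) (A : E →L[ℂ] E) :
    adjoint (conjOp Γ A) = conjOp Γ (adjoint A) := by
  refine ((eq_adjoint_iff _ _).mpr fun x y => ?_).symm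
  calc inner ℂ (Γ (adjoint A (Γ x))) y
      = inner ℂ (Γ (adjoint A (Γ x))) (Γ (Γ y)) := by rw [hΓ]
    _ = inner ℂ (A (Γ y)) (Γ x) := by rw [Γ.inner_map_map_of_conj, adjoint_inner_right]
    _ = inner ℂ (Γ (Γ (A (Γ y)))) (Γ x) := by rw [hΓ]
    _ = inner ℂ x (Γ (A (Γ y))) := Γ.inner_map_map_of_conj _ _

def transposeOp (X : E →L[ℂ] E) : E →L[ℂ] E := conjOp Γ (adjoint X)

theorem transposeOp_comp (hΓ : ∀ x, Γ (Γ x) = x) (A B : E →L[ℂ] E) :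
    transposeOp Γ (A ∘L B) = transposeOp Γ B ∘L transposeOp Γ A := by
  rw [transposeOp, adjoint_comp, conjOp_comp Γ hΓ]; rfl

theorem transposeOp_one (hΓ : ∀ x, Γ (Γ x) = x) : transposeOp Γ (1 : E →L[ℂ] E) = 1 := by
  rw [transposeOp, one_def, adjoint_id, ← one_def, conjOp_one Γ hΓ]

theorem transposeOp_conjOp (hΓ : ∀ x, Γ (Γ x) = x) (A : E →L[ℂ] E) :
    transposeOp Γ (conjOp Γ A) = adjoint A := by
  rw [transposeOp, adjoint_conjOp Γ hΓ, conjOp_conjOp Γ hΓ]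

theorem conjOp_comp_transposeOp_eq (hΓ : ∀ x, Γ (Γ x) = x) {S T : E →L[ℂ] E}
    (h : T ∘L adjoint S = conjOp Γ (S ∘L adjoint T)) :
    conjOp Γ T ∘L transposeOp Γ S = S ∘L transposeOp Γ (conjOp Γ T) := by
  rw [transposeOp_conjOp Γ hΓ, transposeOp, ← conjOp_comp Γ hΓ, h, conjOp_conjOp Γ hΓ]

theorem transposeOp_comp_eq_self_of_leftInverse (hΓ : ∀ x, Γ (Γ x) = x)
    {S R Sinv : E →L[ℂ] E} (hSinv : Sinv ∘L S = 1)
    (h : R ∘L transposeOp Γ S = S ∘L transposeOp Γ R) :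
    transposeOp Γ (Sinv ∘L R) = Sinv ∘L R :=
  calc transposeOp Γ (Sinv ∘L R)
      = Sinv ∘L S ∘L transposeOp Γ R ∘L transposeOp Γ Sinv := by
        rw [transposeOp_comp Γ hΓ, ← comp_assoc, hSinv, one_def, id_comp]
    _ = Sinv ∘L R ∘L transposeOp Γ (Sinv ∘L S) := by
        rw [transposeOp_comp Γ hΓ, ← comp_assoc S, ← h, comp_assoc]
    _ = Sinv ∘L R := by rw [hSinv, transposeOp_one Γ hΓ, one_def, comp_id]

end Conjugation

theorem stmt4_general (Γ : H →ₛₗᵢ[starRingEnd ℂ] H) (hΓ : ∀ x, Γ (Γ x) = x)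
    (S T : H →L[ℂ] H) (hsymp : SympRel Γ S T)
    (Sinv : H →L[ℂ] H) (hSinv₁ : Sinv ∘L S = 1) :
    conjOp Γ (adjoint (Sinv ∘L conjOp Γ T)) = Sinv ∘L conjOp Γ T :=
  transposeOp_comp_eq_self_of_leftInverse Γ hΓ hSinv₁
    (conjOp_comp_transposeOp_eq Γ hΓ (sub_eq_zero.mp hsymp.2.2.2))

/-- under the symplectic relations, `Γ ∘ (S⁻¹ T̄)* ∘ Γ = S⁻¹ T̄`. -/
theorem stmt4 (Γ : H →ₛₗᵢ[starRingEnd ℂ] H) (hΓ : ∀ x, Γ (Γ x) = x)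
    (S T : H →L[ℂ] H) (hsymp : SympRel Γ S T)
    (Sinv : H →L[ℂ] H) (hSinv₁ : Sinv ∘L S = 1) (hSinv₂ : S ∘L Sinv = 1) :
    conjOp Γ (adjoint (Sinv ∘L conjOp Γ T)) = Sinv ∘L conjOp Γ T :=
  stmt4_general Γ hΓ S T hsymp Sinv hSinv₁
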